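/- arXiv:2401.01631 — 6 statements merged into one kernel-verified Lean document; each statement's English description precedes it below -/
import Mathlib

section
/- Let κ be a cardinal and let X be the subspace of (κ⁺+1)^ω consisting of functions f with {n : f n = κ⁺} finite. Then Y = (κ⁺)^ω is a countably compact subspace of X. -/
open Set

/-- A space is countably compact iff every countable open cover has a finite subcover. -/
def CountablyCompactCover (X : Type*) [TopologicalSpace X] : Prop :=
  ∀ U : ℕ → Set X, (∀ n, IsOpen (U n)) → (⋃ n, U n) = Set.univ →
    ∃ s : Finset ℕ, (⋃ n ∈ s, U n) = Set.univ

theorem aux_inducing (c : Ordinal) :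
    Topology.IsInducing (fun (f : ℕ → ↥(Set.Iic c)) n => (f n : Ordinal)) := by
  constructor
  rw [induced_to_pi]
  have : ∀ n : ℕ, TopologicalSpace.induced (fun (f : ℕ → ↥(Set.Iic c)) => ((f n : Ordinal)))
      inferInstance = TopologicalSpace.induced (fun f : ℕ → ↥(Set.Iic c) => f n)
        (TopologicalSpace.induced (Subtype.val) inferInstance) := by
    intro n
    rw [induced_compose]
    rfl
  simp_rw [this]
  rfl

/-- For a cardinal κ, in the subspace X of (κ⁺+1)^ω consisting of
functions taking the value κ⁺ only finitely often, the subspace Y = (κ⁺)^ω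
is a countably compact subspace of X. -/
theorem stmt_1 (κ : Cardinal) (c : Ordinal) (hc : c = (Order.succ κ).ord)
    (X : Set (ℕ → ↥(Set.Iic c)))
    (hX : X = {f | {n | (f n : Ordinal) = c}.Finite}) :
    CountablyCompactCover ↥{g : ↥X | ∀ n, ((g : ℕ → ↥(Set.Iic c)) n : Ordinal) < c} := by
  intro U hUopen hUcov
  by_contra hno
  push_neg at hno
  have hx : ∀ n : ℕ, ∃ x : ↥{g : ↥X | ∀ n, ((g : ℕ → ↥(Set.Iic c)) n : Ordinal) < c}, ∀ k ≤ n, x ∉ U k := by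
    intro n
    have h := hno (Finset.range (n + 1))
    rw [Set.ne_univ_iff_exists_notMem] at h
    obtain ⟨x, hx⟩ := h
    refine ⟨x, fun k hk hmem => hx ?_⟩
    exact Set.mem_biUnion (Finset.mem_range.2 (Nat.lt_succ_of_le hk)) hmem
  choose x hx using hx
  -- the evaluation map into the full product of ordinals
  set e : ↥{g : ↥X | ∀ n, ((g : ℕ → ↥(Set.Iic c)) n : Ordinal) < c} → ℕ → Ordinal := fun g n => ((g : ℕ → ↥(Set.Iic c)) n : Ordinal) with he_def
  have hval : ∀ g (n : ℕ), e g n < c := fun g n => g.2 n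
  set β : Ordinal := ⨆ p : ℕ × ℕ, e (x p.1) p.2 with hβ_def
  have hβ : β < c := by
    rcases lt_or_ge κ Cardinal.aleph0 with hκ | hκ
    · -- finite case: c is a successor ordinal
      obtain ⟨m, hm⟩ := Cardinal.lt_aleph0.1 hκ
      have hsucc : c = (m : Ordinal) + 1 := by
        rw [hc, hm]
        rw [Cardinal.succ_natCast, show ((m : Cardinal) + 1) = ((m + 1 : ℕ) : Cardinal) by push_cast; ring,
          Cardinal.ord_nat, Nat.cast_succ]
      refine lt_of_le_of_lt (ciSup_le fun p => ?_) (by rw [hsucc]; rw [Ordinal.add_one_eq_succ]; exact Order.lt_succ _)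
      have := hval (x p.1) p.2
      rw [hsucc, Ordinal.add_one_eq_succ, Order.lt_succ_iff] at this
      exact this
    · have hreg := Cardinal.isRegular_succ hκ
      rw [hc]
      refine Cardinal.iSup_lt_ord_lift_of_isRegular hreg ?_ ?_
      · rw [Cardinal.mk_denumerable, Cardinal.lift_aleph0]
        exact lt_of_le_of_lt hκ (Order.lt_succ κ)
      · intro p
        rw [← hc]; exact hval _ _
  -- the compact box
  set K : Set (ℕ → Ordinal) := Set.pi Set.univ (fun _ => Set.Iic β) with hK_def
  have hKcomp : IsCompact K := by
    refine isCompact_univ_pi fun n => ?_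
    rw [← Icc_bot]
    exact isCompact_Icc
  have hKrange : K ⊆ Set.range e := by
    intro f hf
    have hfle : ∀ n, f n ≤ β := fun n => hf n (Set.mem_univ n)
    have hflt : ∀ n, f n < c := fun n => lt_of_le_of_lt (hfle n) hβ
    set g0 : ℕ → ↥(Set.Iic c) := fun n => ⟨f n, (hflt n).le⟩ with hg0
    have hg0X : g0 ∈ X := by
      rw [hX]
      have : {n | (g0 n : Ordinal) = c} = ∅ := by
        ext n
        simp only [Set.mem_setOf_eq, Set.mem_empty_iff_false, iff_false]
        exact fun h => absurd h (ne_of_lt (hflt n))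
      simp [this]
    refine ⟨⟨⟨g0, hg0X⟩, fun n => hflt n⟩, ?_⟩
    rfl
  -- e is inducing
  have hind : Topology.IsInducing e := by
    have h1 : Topology.IsInducing (Subtype.val :
        {g : ↥X | ∀ n, ((g : ℕ → ↥(Set.Iic c)) n : Ordinal) < c} → ↥X) :=
      Topology.IsInducing.subtypeVal
    have h2 : Topology.IsInducing (Subtype.val : ↥X → (ℕ → ↥(Set.Iic c))) :=
      Topology.IsInducing.subtypeVal
    have h3 := aux_inducing c
    exact h3.comp (h2.comp h1)
  -- the preimage of K is compact
  have hpre : IsCompact (e ⁻¹' K) := by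
    rw [hind.isCompact_iff]
    have : e '' (e ⁻¹' K) = K := by
      rw [Set.image_preimage_eq_inter_range, Set.inter_eq_left.2 hKrange]
    rw [this]
    exact hKcomp
  -- finite subcover covering the compact set
  obtain ⟨t, ht⟩ := hpre.elim_finite_subcover U hUopen
    (by rw [hUcov]; exact Set.subset_univ _)
  set N : ℕ := t.sup id with hN
  have hxN : x N ∈ e ⁻¹' K := by
    intro n _
    exact le_ciSup (Ordinal.bddAbove_range _) (⟨N, n⟩ : ℕ × ℕ)
  obtain ⟨k, hk, hmem⟩ := Set.mem_iUnion₂.1 (ht hxN)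
  exact hx N k (Finset.le_sup (f := id) hk) hmem
end

section
/- Let κ be a cardinal and let X be the subspace of (κ⁺+1)^ω consisting of functions f for which {n : f n = κ⁺} is finite. Then every nonempty open subset of X contains a countably infinite subset that is closed and discrete in X. In particular, X is not countably compact. -/
/-!
Let `f` lie in a nonempty open set `V` of `X`, so that `V` contains every `h ∈ X` agreeing with
`f` on some finite set `I`. Choose distinct coordinates `e 0, e 1, …` outside `I` at which `f`
is not `t` (here `t = κ⁺`) and let `g n` be `f` overwritten with `t` at `e 0, …, e (n-1)`. The
`g n` are distinct points of `V`, and every `z ∈ X` has `z (e k) ≠ t` for some `k`; the open set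
`{x | x (e k) ≠ t}` then contains `g n` only for `n ≤ k`, so `{g n}` has no accumulation point.
An infinite set without accumulation points rules out countable compactness.
-/

open Set

open Filter Topology Function

theorem CountablyCompactCover.countablyCompactSpace {X : Type*} [TopologicalSpace X]
    (h : CountablyCompactCover X) : CountablyCompactSpace X := by
  refine ⟨isCountablyCompact_iff_countable_open_cover.2 fun U hU hcover => ?_⟩
  obtain ⟨s, hs⟩ := h U hU (univ_subset_iff.1 hcover)
  exact ⟨s, hs.symm.subset⟩

theorem not_accPt_range_of_finite_preimage {Y : Type*} [TopologicalSpace Y] [T1Space Y]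
    {a : ℕ → Y} {z : Y} {U : Set Y} (hU : U ∈ 𝓝 z) (hfin : (a ⁻¹' U).Finite) :
    ¬AccPt z (𝓟 (range a)) := fun hz =>
  (Set.Infinite.of_accPt (hz.nhds_inter hU)) <| (hfin.image a).subset <| by
    rintro _ ⟨hy, n, rfl⟩
    exact ⟨n, hy, rfl⟩

theorem IsOpen.exists_finset_forall_eq_imp_mem {ι : Type*} {π : ι → Type*}
    [∀ i, TopologicalSpace (π i)] {W : Set (∀ i, π i)} (hW : IsOpen W) {f : ∀ i, π i}
    (hf : f ∈ W) : ∃ I : Finset ι, ∀ h, (∀ i ∈ I, h i = f i) → h ∈ W := by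
  obtain ⟨I, u, hu, hIu⟩ := isOpen_pi_iff.1 hW f hf
  exact ⟨I, fun h hh => hIu fun i hi => hh i hi ▸ (hu i hi).2⟩

section FinitelyOftenEq

variable {ι α : Type*} {t : α}

def finitelyOftenEq (t : α) : Set (ι → α) := {f | {i | f i = t}.Finite}

theorem const_mem_finitelyOftenEq {x : α} (hx : x ≠ t) :
    (fun _ => x) ∈ finitelyOftenEq (ι := ι) t := by
  simp [finitelyOftenEq, hx]

open Classical in
noncomputable def overwriteFirst (t : α) (f : ι → α) (e : ℕ → ι) (n : ℕ) : ι → α :=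
  fun i => if i ∈ e '' Iio n then t else f i

theorem overwriteFirst_apply_of_lt {f : ι → α} {e : ℕ → ι} {k n : ℕ} (h : k < n) :
    overwriteFirst t f e n (e k) = t :=
  if_pos (mem_image_of_mem e (mem_Iio.2 h))

theorem overwriteFirst_apply_of_notMem {f : ι → α} {e : ℕ → ι} {n : ℕ} {i : ι}
    (h : i ∉ e '' Iio n) : overwriteFirst t f e n i = f i :=
  if_neg h

theorem overwriteFirst_mem_finitelyOftenEq {f : ι → α} (hf : f ∈ finitelyOftenEq t)
    (e : ℕ → ι) (n : ℕ) : overwriteFirst t f e n ∈ finitelyOftenEq t := by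
  refine (((finite_Iio n).image e).union hf).subset fun i hi => ?_
  by_cases h : i ∈ e '' Iio n
  · exact Or.inl h
  · exact Or.inr ((overwriteFirst_apply_of_notMem h).symm.trans hi)

theorem injective_overwriteFirst {f : ι → α} {e : ℕ → ι} (he : Injective e)
    (hf : ∀ k, f (e k) ≠ t) : Injective (overwriteFirst t f e) := by
  refine .of_lt_imp_ne fun n m hnm heq => ?_
  have hn : overwriteFirst t f e n (e n) = f (e n) :=
    overwriteFirst_apply_of_notMem fun ⟨k, hk, hkn⟩ => (he hkn ▸ hk : n < n).false
  exact hf n (hn.symm.trans (congrFun heq (e n) ▸ overwriteFirst_apply_of_lt hnm))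

theorem exists_nhds_finite_preimage_overwriteFirst [TopologicalSpace α] [T1Space α]
    {z : ι → α} (hz : z ∈ finitelyOftenEq t) (f : ι → α) {e : ℕ → ι}
    (he : Injective e) : ∃ U ∈ 𝓝 z, (overwriteFirst t f e ⁻¹' U).Finite := by
  obtain ⟨k, hk⟩ := (Set.Finite.preimage he.injOn hz).infinite_compl.nonempty
  refine ⟨(fun x => x (e k)) ⁻¹' {t}ᶜ,
    (isOpen_compl_singleton.preimage (continuous_apply (e k))).mem_nhds hk,
    (finite_Iic k).subset fun n hn => ?_⟩
  by_contra hkn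
  exact hn (overwriteFirst_apply_of_lt (not_le.1 hkn))

theorem exists_infinite_subset_forall_not_accPt [TopologicalSpace α] [T1Space α] [Infinite ι]
    {V : Set (finitelyOftenEq (ι := ι) t)} (hV : IsOpen V) (hne : V.Nonempty) :
    ∃ A ⊆ V, A.Countable ∧ A.Infinite ∧ ∀ z, ¬AccPt z (𝓟 A) := by
  obtain ⟨⟨f, hfX⟩, hfV⟩ := hne
  obtain ⟨W, hW, rfl⟩ := isOpen_induced_iff.1 hV
  obtain ⟨I, hI⟩ := IsOpen.exists_finset_forall_eq_imp_mem hW hfV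
  have hfree : ((I : Set ι) ∪ {i | f i = t})ᶜ.Infinite :=
    (I.finite_toSet.union hfX).infinite_compl
  set e : ℕ → ι := fun k => hfree.natEmbedding _ k
  have he : Injective e := Subtype.val_injective.comp (hfree.natEmbedding _).injective
  have heI : ∀ k, e k ∉ I := fun k h => (hfree.natEmbedding _ k).2 (Or.inl h)
  have hfe : ∀ k, f (e k) ≠ t := fun k h => (hfree.natEmbedding _ k).2 (Or.inr h)
  set a : ℕ → finitelyOftenEq t := fun n => ⟨_, overwriteFirst_mem_finitelyOftenEq hfX e n⟩
  have ha : Injective a := fun n m h => injective_overwriteFirst he hfe (congrArg Subtype.val h)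
  refine ⟨range a, ?_, countable_range a, infinite_range_of_injective ha, fun z => ?_⟩
  · rintro _ ⟨n, rfl⟩
    refine hI _ fun i hi => overwriteFirst_apply_of_notMem ?_
    rintro ⟨k, -, rfl⟩
    exact heI k hi
  · obtain ⟨U, hU, hfin⟩ := exists_nhds_finite_preimage_overwriteFirst z.2 f he
    exact not_accPt_range_of_finite_preimage (continuous_subtype_val.continuousAt hU) hfin

end FinitelyOftenEq

/-- For a cardinal κ, in the subspace X of (κ⁺+1)^ω of functions taking
value κ⁺ only finitely often, every nonempty open subset contains a countably infinite
subset that is closed and discrete in X; in particular X is not countably compact. -/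
theorem stmt_2 (κ : Cardinal) (c : Ordinal) (hc : c = (Order.succ κ).ord)
    (X : Set (ℕ → ↥(Set.Iic c)))
    (hX : X = {f | {n | (f n : Ordinal) = c}.Finite}) :
    (∀ V : Set ↥X, IsOpen V → V.Nonempty →
      ∃ A ⊆ V, A.Countable ∧ A.Infinite ∧ IsClosed A ∧ DiscreteTopology ↥A) ∧
    ¬ CountablyCompactCover ↥X := by
  set top : Iic c := ⟨c, self_mem_Iic⟩
  obtain rfl : X = finitelyOftenEq top := by
    ext f
    simp only [hX, finitelyOftenEq, mem_ofPred_eq, top, Subtype.ext_iff]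
  refine ⟨fun V hV hne => ?_, fun hcc => ?_⟩
  · obtain ⟨A, hAV, hAc, hAi, hacc⟩ := exists_infinite_subset_forall_not_accPt hV hne
    exact ⟨A, hAV, hAc, hAi, isClosed_iff_accPt.2 fun z hz => (hacc z hz).elim,
      discreteTopology_of_noAccPts fun z _ => hacc z⟩
  · have hc0 : (0 : Ordinal) < c := hc ▸ Cardinal.ord_pos.2 (Cardinal.succ_pos κ)
    have hzero : (fun _ => ⟨0, hc0.le⟩) ∈ finitelyOftenEq (ι := ℕ) top :=
      const_mem_finitelyOftenEq fun h => hc0.ne (congrArg Subtype.val h)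
    obtain ⟨A, -, -, hAi, hacc⟩ :=
      exists_infinite_subset_forall_not_accPt isOpen_univ ⟨⟨_, hzero⟩, mem_univ _⟩
    have := hcc.countablyCompactSpace
    obtain ⟨z, -, hz⟩ := CountablyCompactSpace.isCountablyCompact_univ.exists_accPt_of_infinite
      (subset_univ A) hAi
    exact hacc z hz
end

section
/- Let X be a first countable, zero-dimensional Hausdorff space whose underlying set is ω₁ and which is left-separated in order type ω₁ by the ordinal ordering (every initial segment of ordinals is closed). Then X has no dense relatively countably compact subset: for every dense D ⊆ X there is a countably infinite A ⊆ D that is closed and discrete in X. -/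
/-!
We build a strictly increasing sequence `d₀ < d₁ < ⋯` in `D` together with a decreasing
sequence of uncountable open sets `Eₙ ∋ dₙ`. A point `x` lying above every `dₙ` is isolated
from the sequence by the open set `{β | x ≤ β}`. The points below some `dⱼ` form a countable
set, enumerated once `dⱼ` is chosen; diagonalising over all these enumerations, at each step
finitely many of them are enclosed in a clopen `W` with `Eₙ \ W` still uncountable (first
countability and `T₁` give `{x}` as a countable intersection of clopens), and we pass to
`Eₙ₊₁ = Eₙ \ W`. Thus every point has a neighbourhood containing only finitely many `dₙ`,
so `{dₙ}` is closed and discrete. Left separation is what lets `D` meet `Eₙ₊₁` above `dₙ`.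
-/

open Set Filter Topology TopologicalSpace Cardinal

section General

variable {X : Type*} [TopologicalSpace X]

theorem TopologicalSpace.IsTopologicalBasis.exists_mem_not_countable_diff [T1Space X]
    [FirstCountableTopology X] {B : Set (Set X)} (hB : IsTopologicalBasis B) {E : Set X}
    (hE : ¬E.Countable) (x : X) : ∃ W ∈ B, x ∈ W ∧ ¬(E \ W).Countable := by
  obtain ⟨b, hb⟩ := (𝓝 x).exists_antitone_basis
  choose W hWB hxW hWb using fun n => hB.mem_nhds_iff.1 (hb.mem n)
  by_contra! h
  refine hE (((countable_singleton x).union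
    (countable_iUnion fun n => h _ (hWB n) (hxW n))).mono fun y hy => ?_)
  by_cases hyx : y = x
  · exact Or.inl hyx
  · obtain ⟨n, -, hn⟩ := hb.toHasBasis.mem_iff.1 (compl_singleton_mem_nhds (Ne.symm hyx))
    exact Or.inr (mem_iUnion.2 ⟨n, hy, fun hyW => hn (hWb n hyW) rfl⟩)

theorem exists_isClopen_superset_not_countable_diff [T1Space X] [FirstCountableTopology X]
    (hzd : IsTopologicalBasis {s : Set X | IsClopen s}) {E : Set X} (hE : ¬E.Countable)
    (F : Finset X) : ∃ W, IsClopen W ∧ ↑F ⊆ W ∧ ¬(E \ W).Countable := by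
  classical
  induction F using Finset.induction_on with
  | empty => exact ⟨∅, isClopen_empty, by simp, by simpa using hE⟩
  | insert x F _ ih =>
    obtain ⟨W, hW, hFW, hEW⟩ := ih
    obtain ⟨V, hV, hxV, hEV⟩ := hzd.exists_mem_not_countable_diff hEW x
    refine ⟨W ∪ V, hW.union hV, ?_, by rwa [← sdiff_sdiff]⟩
    rw [Finset.coe_insert, insert_subset_iff]
    exact ⟨Or.inr hxV, hFW.trans subset_union_left⟩

theorem isClosed_range_and_isDiscrete_of_forall_not_mapClusterPt [T1Space X] {ι : Type*}
    {d : ι → X} (h : ∀ x, ¬MapClusterPt x cofinite d) :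
    IsClosed (range d) ∧ IsDiscrete (range d) := by
  rw [← compl_mem_codiscrete_iff, mem_codiscrete_accPt, compl_compl]
  refine fun x hx => h x (mapClusterPt_iff_frequently.2 fun U hU => ?_)
  rw [frequently_cofinite_iff_infinite]
  exact ((Set.Infinite.of_accPt (hx.nhds_inter hU)).mono (by grind)).of_image d

end General

section Order

variable {X : Type*} [TopologicalSpace X] [LinearOrder X]

theorem Dense.exists_mem_open_gt (hls : ∀ c : X, IsClosed (Iio c))
    (hcount : ∀ c : X, (Iic c).Countable) {D U : Set X} (hD : Dense D) (hU : IsOpen U)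
    (hUc : ¬U.Countable) (c : X) : ∃ d ∈ D, d ∈ U ∧ c < d := by
  obtain ⟨y, hyU, hcy⟩ : ∃ y ∈ U, c < y := by
    by_contra! h
    exact hUc ((hcount c).mono h)
  obtain ⟨d, hdD, hdU, hyd⟩ := hD.exists_mem_open (hU.sdiff (hls y)) ⟨y, hyU, lt_irrefl y⟩
  exact ⟨d, hdD, hdU, hcy.trans_le (not_lt.1 hyd)⟩

theorem not_mapClusterPt_of_forall_le (hls : ∀ c : X, IsClosed (Iio c)) {d : ℕ → X}
    (hd : StrictMono d) {x : X} (hx : ∀ n, d n ≤ x) (l : Filter ℕ) : ¬MapClusterPt x l d := by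
  intro h
  obtain ⟨n, hn⟩ :=
    (mapClusterPt_iff_frequently.1 h _ ((hls x).isOpen_compl.mem_nhds (lt_irrefl x))).exists
  exact hn ((hd (Nat.lt_succ_self n)).trans_le (hx _))

namespace LeftSeparated

/-- `point` is the latest `dₙ`, all later points stay in `region`, and `sources` collects the
earlier points `dⱼ`; at step `n` the first `n + 1` values of the enumeration `e dⱼ` of `Iio dⱼ`
are pushed out of the closure of every later region (see `Stage.IsNext`). -/
structure Stage (X : Type*) [TopologicalSpace X] where
  point : X
  region : Set X
  sources : Finset X
  isOpen_region : IsOpen region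
  not_countable_region : ¬region.Countable
  point_mem_region : point ∈ region
  point_mem_sources : point ∈ sources

structure Stage.IsNext (D : Set X) (e : X → ℕ → X) (n : ℕ) (s t : Stage X) : Prop where
  point_mem : t.point ∈ D
  point_lt : s.point < t.point
  region_subset : t.region ⊆ s.region
  sources_subset : s.sources ⊆ t.sources
  notMem_closure : ∀ y ∈ s.sources, ∀ k ≤ n, e y k ∉ closure t.region

theorem Stage.exists_isNext [T1Space X] [FirstCountableTopology X]
    (hzd : IsTopologicalBasis {s : Set X | IsClopen s}) (hls : ∀ c : X, IsClosed (Iio c))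
    (hcount : ∀ c : X, (Iic c).Countable) {D : Set X} (hD : Dense D) (e : X → ℕ → X) (n : ℕ)
    (s : Stage X) : ∃ t, s.IsNext D e n t := by
  obtain ⟨W, hW, hFW, hEW⟩ := exists_isClopen_superset_not_countable_diff hzd
    s.not_countable_region ((s.sources ×ˢ Finset.range (n + 1)).image fun p => e p.1 p.2)
  have hEWo := s.isOpen_region.sdiff hW.isClosed
  obtain ⟨d, hdD, hdE, hsd⟩ := hD.exists_mem_open_gt hls hcount hEWo hEW s.point
  refine ⟨⟨d, s.region \ W, insert d s.sources, hEWo, hEW, hdE, Finset.mem_insert_self d _⟩,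
    hdD, hsd, sdiff_subset, Finset.subset_insert d _, fun y hy k hk hyk => ?_⟩
  have hW' : closure (s.region \ W) ⊆ Wᶜ :=
    closure_minimal (fun _ h => h.2) hW.isOpen.isClosed_compl
  refine hW' hyk (hFW (Finset.mem_coe.2 (Finset.mem_image_of_mem _ (a := (y, k)) ?_)))
  exact Finset.mem_product.2 ⟨hy, Finset.mem_range.2 (Nat.lt_succ_of_le hk)⟩

variable {D : Set X} {e : X → ℕ → X} {s : ℕ → Stage X}

theorem Stage.antitone_region (hs : ∀ n, (s n).IsNext D e n (s (n + 1))) :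
    Antitone fun n => (s n).region :=
  antitone_nat_of_succ_le fun n => (hs n).region_subset

theorem Stage.monotone_sources (hs : ∀ n, (s n).IsNext D e n (s (n + 1))) :
    Monotone fun n => (s n).sources :=
  monotone_nat_of_le_succ fun n => (hs n).sources_subset

theorem Stage.strictMono_point (hs : ∀ n, (s n).IsNext D e n (s (n + 1))) :
    StrictMono fun n => (s n).point :=
  strictMono_nat_of_lt_succ fun n => (hs n).point_lt

theorem Stage.not_mapClusterPt (hs : ∀ n, (s n).IsNext D e n (s (n + 1)))
    (he : ∀ c, Iio c ⊆ range (e c)) (j : ℕ) (x : X) (hx : x < (s j).point) :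
    ¬MapClusterPt x atTop fun n => (s n).point := by
  obtain ⟨k, rfl⟩ := he _ hx
  have hsrc := Stage.monotone_sources hs (le_max_left j k) (s j).point_mem_sources
  have hcl := (hs (max j k)).notMem_closure _ hsrc k (le_max_right j k)
  intro h
  obtain ⟨m, hmem, hm⟩ := ((mapClusterPt_iff_frequently.1 h _
    (isClosed_closure.isOpen_compl.mem_nhds hcl)).and_eventually
      (eventually_ge_atTop (max j k + 1))).exists
  exact hmem (subset_closure (Stage.antitone_region hs hm (s m).point_mem_region))

end LeftSeparated

open LeftSeparated in
theorem Dense.exists_strictMono_forall_not_mapClusterPt [T1Space X] [FirstCountableTopology X]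
    [Uncountable X] (hzd : IsTopologicalBasis {s : Set X | IsClopen s})
    (hls : ∀ c : X, IsClosed (Iio c)) (hcount : ∀ c : X, (Iic c).Countable) {D : Set X}
    (hD : Dense D) :
    ∃ d : ℕ → X, (∀ n, d n ∈ D) ∧ StrictMono d ∧ ∀ j, ∀ x < d j, ¬MapClusterPt x atTop d := by
  choose e he using fun c : X =>
    countable_iff_exists_subset_range.1 ((hcount c).mono Iio_subset_Iic_self)
  obtain ⟨d₀, hd₀⟩ := hD.nonempty
  choose next hnext using Stage.exists_isNext hzd hls hcount hD e
  let s₀ : Stage X :=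
    ⟨d₀, univ, {d₀}, isOpen_univ, not_countable_univ, mem_univ d₀, Finset.mem_singleton_self d₀⟩
  let s : ℕ → Stage X := fun n => Nat.rec s₀ next n
  have hs : ∀ n, (s n).IsNext D e n (s (n + 1)) := fun n => hnext n (s n)
  refine ⟨fun n => (s n).point, fun n => ?_, Stage.strictMono_point hs,
    Stage.not_mapClusterPt hs he⟩
  cases n with
  | zero => exact hd₀
  | succ n => exact (hs n).point_mem

theorem Dense.exists_countable_infinite_isClosed_discreteTopology [T1Space X]
    [FirstCountableTopology X] [Uncountable X] (hzd : IsTopologicalBasis {s : Set X | IsClopen s})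
    (hls : ∀ c : X, IsClosed (Iio c)) (hcount : ∀ c : X, (Iic c).Countable) {D : Set X}
    (hD : Dense D) : ∃ A ⊆ D, A.Countable ∧ A.Infinite ∧ IsClosed A ∧ DiscreteTopology A := by
  obtain ⟨d, hdD, hd, hbelow⟩ := hD.exists_strictMono_forall_not_mapClusterPt hzd hls hcount
  have hcl : ∀ x, ¬MapClusterPt x cofinite d := by
    rw [Nat.cofinite_eq_atTop]
    intro x
    by_cases! hx : ∃ j, x < d j
    · obtain ⟨j, hj⟩ := hx
      exact hbelow j x hj
    · exact not_mapClusterPt_of_forall_le hls hd hx _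
  obtain ⟨hclosed, hdisc⟩ := isClosed_range_and_isDiscrete_of_forall_not_mapClusterPt hcl
  exact ⟨range d, range_subset_iff.2 hdD, countable_range d,
    infinite_range_of_injective hd.injective, hclosed, isDiscrete_iff_discreteTopology.1 hdisc⟩

end Order

section Ordinal

theorem countable_Iic_Iio_ord_aleph_one (c : Iio (aleph 1).ord) : (Iic c).Countable := by
  have hc : (Iio (Order.succ (c : Ordinal))).Countable := by
    rw [← le_aleph0_iff_set_countable, mk_Iio_ordinal, lift_le_aleph0, ← lt_aleph_one_iff,
      ← lt_ord]
    exact (isSuccLimit_ord (aleph0_le_aleph 1)).succ_lt c.2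
  exact (hc.preimage Subtype.val_injective).mono
    fun y (hy : (y : Ordinal) ≤ c) => Order.lt_succ_of_le hy

instance : Uncountable (Iio (aleph 1).ord) := by
  rw [← aleph0_lt_mk_iff, mk_Iio_ordinal, card_ord]
  simp

end Ordinal

/-- A first countable, zero-dimensional Hausdorff topology on ω₁ in which
every initial segment of ordinals is closed (left-separated in type ω₁) admits no dense
relatively countably compact subset: every dense D contains a countably infinite subset
that is closed and discrete. -/
theorem stmt_4 [t : TopologicalSpace ↥(Set.Iio (Cardinal.aleph 1).ord)]
    [FirstCountableTopology ↥(Set.Iio (Cardinal.aleph 1).ord)]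
    [T2Space ↥(Set.Iio (Cardinal.aleph 1).ord)]
    (hzd : TopologicalSpace.IsTopologicalBasis
      {s : Set ↥(Set.Iio (Cardinal.aleph 1).ord) | IsClopen s})
    (hls : ∀ α : ↥(Set.Iio (Cardinal.aleph 1).ord),
      IsClosed {β : ↥(Set.Iio (Cardinal.aleph 1).ord) | (β : Ordinal) < (α : Ordinal)})
    (D : Set ↥(Set.Iio (Cardinal.aleph 1).ord)) (hD : Dense D) :
    ∃ A ⊆ D, A.Countable ∧ A.Infinite ∧ IsClosed A ∧ DiscreteTopology ↥A :=
  hD.exists_countable_infinite_isClosed_discreteTopology hzd hls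
    countable_Iic_Iio_ord_aleph_one
end

section
/- If Y is a countable regular topological space and D ⊆ Y is a closed discrete subset, then there exists a function W assigning to each d ∈ D an open neighborhood W(d) of d such that the family {W(d) : d ∈ D} is discrete in Y, i.e. every point of Y has a neighborhood meeting W(d) for at most one d ∈ D. -/
open Set

/-- Regular separation: a point off a closed set has an open nbhd with closure
disjoint from the closed set. -/
lemma aux_sep {Y : Type*} [TopologicalSpace Y] [RegularSpace Y] {C : Set Y} (hC : IsClosed C)
    {y : Y} (hy : y ∉ C) : ∃ B : Set Y, IsOpen B ∧ y ∈ B ∧ closure B ∩ C = ∅ := by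
  have h : Cᶜ ∈ nhds y := hC.isOpen_compl.mem_nhds hy
  obtain ⟨t, ht, htc, hts⟩ := exists_mem_nhds_isClosed_subset h
  refine ⟨interior t, isOpen_interior, mem_interior_iff_mem_nhds.mpr ht, ?_⟩
  have : closure (interior t) ⊆ Cᶜ :=
    (htc.closure_subset_iff.mpr interior_subset).trans hts
  rw [eq_empty_iff_forall_notMem]
  exact fun x ⟨hx1, hx2⟩ => this hx1 hx2

/-- The step lemma: given finitely many previous sets, choose the next one. -/
lemma aux_step {Y : Type*} [TopologicalSpace Y] [RegularSpace Y] (D : Set Y)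
    (hcl : ∀ y, IsClosed (D \ {y})) (n : ℕ) (prev : ℕ → Set Y) (y : Y) :
    ∃ B : Set Y, IsOpen B ∧ y ∈ B ∧ closure B ∩ (D \ {y}) = ∅ ∧
      ∀ m, m < n → y ∉ closure (prev m) → closure B ∩ closure (prev m) = ∅ := by
  classical
  set C : Set Y := (D \ {y}) ∪
    ⋃ m ∈ Finset.range n, (if y ∈ closure (prev m) then (∅ : Set Y) else closure (prev m))
    with hCdef
  have hCclosed : IsClosed C := by
    refine (hcl y).union (Set.Finite.isClosed_biUnion (Finset.range n).finite_toSet ?_)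
    intro i _
    split
    · exact isClosed_empty
    · exact isClosed_closure
  have hyC : y ∉ C := by
    intro hC
    rcases hC with h | h
    · exact h.2 rfl
    · simp only [mem_iUnion, exists_prop] at h
      obtain ⟨i, _, hmem⟩ := h
      split_ifs at hmem with hc
      · exact hmem
      · exact hc hmem
  obtain ⟨B, hBo, hyB, hBC⟩ := aux_sep hCclosed hyC
  refine ⟨B, hBo, hyB, ?_, ?_⟩
  · rw [eq_empty_iff_forall_notMem]
    intro x ⟨hx1, hx2⟩
    exact eq_empty_iff_forall_notMem.mp hBC x ⟨hx1, Or.inl hx2⟩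
  · intro m hm hym
    rw [eq_empty_iff_forall_notMem]
    intro x ⟨hx1, hx2⟩
    refine eq_empty_iff_forall_notMem.mp hBC x ⟨hx1, Or.inr ?_⟩
    refine mem_biUnion (Finset.mem_range.mpr hm) ?_
    rw [if_neg hym]
    exact hx2

/-- Existence of the recursive sequence of open sets. -/
lemma aux_seq {Y : Type*} [TopologicalSpace Y] [RegularSpace Y] (D : Set Y)
    (hcl : ∀ y, IsClosed (D \ {y})) (e : ℕ → Y) :
    ∃ A : ℕ → Set Y, ∀ n, IsOpen (A n) ∧ e n ∈ A n ∧ closure (A n) ∩ (D \ {e n}) = ∅ ∧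
      ∀ m, m < n → e n ∉ closure (A m) → closure (A n) ∩ closure (A m) = ∅ := by
  classical
  set A : ℕ → Set Y := WellFounded.fix Nat.lt_wfRel.wf
    (fun n ih => Classical.choose (aux_step D hcl n
      (fun m => if h : m < n then ih m h else ∅) (e n))) with hA
  refine ⟨A, fun n => ?_⟩
  have hfix : A n = Classical.choose (aux_step D hcl n
      (fun m => if h : m < n then A m else ∅) (e n)) := by
    rw [hA]
    exact WellFounded.fix_eq _ _ n
  have hspec := Classical.choose_spec (aux_step D hcl n
      (fun m => if h : m < n then A m else ∅) (e n))
  rw [← hfix] at hspec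
  obtain ⟨h1, h2, h3, h4⟩ := hspec
  refine ⟨h1, h2, h3, fun m hm hnm => ?_⟩
  have := h4 m hm
  rw [dif_pos hm] at this
  exact this hnm

/-- In a countable regular space, every closed discrete subset D admits an
open neighborhood assignment W such that the family {W(d) : d ∈ D} is discrete: every
point has a neighborhood meeting W(d) for at most one d ∈ D. -/
theorem stmt_5 {Y : Type*} [TopologicalSpace Y] [Countable Y] [T3Space Y]
    (D : Set Y) (hDc : IsClosed D) (hDd : DiscreteTopology ↥D) :
    ∃ W : Y → Set Y, (∀ d ∈ D, IsOpen (W d) ∧ d ∈ W d) ∧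
      ∀ x : Y, ∃ V ∈ nhds x, {d | d ∈ D ∧ (V ∩ W d).Nonempty}.Subsingleton := by
  classical
  rcases isEmpty_or_nonempty Y with hY | hY
  · exact ⟨fun _ => ∅, fun d _ => (IsEmpty.false d).elim, fun x => (IsEmpty.false x).elim⟩
  -- D \ {y} is closed for every y
  have hcl : ∀ y, IsClosed (D \ {y}) := by
    intro y
    by_cases hy : y ∈ D
    · -- use discreteness of D
      have hopen : IsOpen ({(⟨y, hy⟩ : ↥D)} : Set ↥D) := isOpen_discrete _
      obtain ⟨U, hU, hUeq⟩ := isOpen_induced_iff.mp hopen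
      have : D \ {y} = D ∩ Uᶜ := by
        ext x
        simp only [mem_diff, mem_singleton_iff, mem_inter_iff, mem_compl_iff]
        constructor
        · rintro ⟨hxD, hxy⟩
          refine ⟨hxD, fun hxU => hxy ?_⟩
          have : (⟨x, hxD⟩ : ↥D) ∈ (Subtype.val ⁻¹' U : Set ↥D) := hxU
          rw [hUeq] at this
          exact congrArg Subtype.val this
        · rintro ⟨hxD, hxU⟩
          refine ⟨hxD, fun hxy => ?_⟩
          subst hxy
          have : (⟨x, hxD⟩ : ↥D) ∈ (Subtype.val ⁻¹' U : Set ↥D) := by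
            rw [hUeq]; rfl
          exact hxU this
      rw [this]
      exact hDc.inter hU.isClosed_compl
    · have : D \ {y} = D := by
        ext x; simp only [mem_diff, mem_singleton_iff]
        exact ⟨fun h => h.1, fun h => ⟨h, fun hxy => hy (hxy ▸ h)⟩⟩
      rw [this]; exact hDc
  obtain ⟨e, he⟩ := exists_surjective_nat Y
  obtain ⟨A, hA⟩ := aux_seq D hcl e
  -- index function
  set idx : Y → ℕ := fun y => Classical.choose (he y) with hidx
  have hidx_eq : ∀ y, e (idx y) = y := fun y => Classical.choose_spec (he y)
  refine ⟨fun y => A (idx y), ?_, ?_⟩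
  · intro d _
    obtain ⟨h1, h2, _, _⟩ := hA (idx d)
    rw [hidx_eq d] at h2
    exact ⟨h1, h2⟩
  · intro x
    have hn : e (idx x) ∈ A (idx x) := (hA (idx x)).2.1
    rw [hidx_eq x] at hn
    refine ⟨A (idx x), (hA (idx x)).1.mem_nhds hn, ?_⟩
    -- key claim
    have key : ∀ d, d ∈ D → (A (idx x) ∩ A (idx d)).Nonempty →
        d = x ∨ (idx d < idx x ∧ x ∈ closure (A (idx d))) := by
      intro d hd ⟨z, hz1, hz2⟩
      rcases lt_trichotomy (idx d) (idx x) with h | h | h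
      · by_cases hx : x ∈ closure (A (idx d))
        · exact Or.inr ⟨h, hx⟩
        · exfalso
          have hdisj := (hA (idx x)).2.2.2 (idx d) h (by rw [hidx_eq x]; exact hx)
          exact eq_empty_iff_forall_notMem.mp hdisj z
            ⟨subset_closure hz1, subset_closure hz2⟩
      · left
        rw [← hidx_eq d, h, hidx_eq x]
      · left
        by_cases hdc : d ∈ closure (A (idx x))
        · have h3 := (hA (idx x)).2.2.1
          by_contra hne
          refine eq_empty_iff_forall_notMem.mp h3 d ⟨hdc, hd, ?_⟩
          rw [mem_singleton_iff, hidx_eq x]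
          exact hne
        · exfalso
          have hdisj := (hA (idx d)).2.2.2 (idx x) h (by rw [hidx_eq d]; exact hdc)
          exact eq_empty_iff_forall_notMem.mp hdisj z
            ⟨subset_closure hz2, subset_closure hz1⟩
    intro d1 hd1 d2 hd2
    obtain ⟨hd1D, hd1n⟩ := hd1
    obtain ⟨hd2D, hd2n⟩ := hd2
    rcases key d1 hd1D hd1n with h1 | ⟨hi1, hc1⟩
    · rcases key d2 hd2D hd2n with h2 | ⟨hi2, hc2⟩
      · rw [h1, h2]
      · -- d1 = x, x ∈ closure (A (idx d2)), closure(A (idx d2)) ∩ (D\{e (idx d2)}) = ∅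
        have h3 := (hA (idx d2)).2.2.1
        by_contra hne
        refine eq_empty_iff_forall_notMem.mp h3 x ⟨hc2, h1 ▸ hd1D, ?_⟩
        rw [mem_singleton_iff, hidx_eq d2]
        intro hx2
        exact hne (h1.trans hx2)
    · rcases key d2 hd2D hd2n with h2 | ⟨hi2, hc2⟩
      · have h3 := (hA (idx d1)).2.2.1
        by_contra hne
        refine eq_empty_iff_forall_notMem.mp h3 x ⟨hc1, h2 ▸ hd2D, ?_⟩
        rw [mem_singleton_iff, hidx_eq d1]
        intro hx1
        exact hne (hx1.symm.trans h2.symm)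
      · -- both closure case with indices < n
        by_cases hii : idx d1 = idx d2
        · rw [← hidx_eq d1, ← hidx_eq d2, hii]
        · rcases Ne.lt_or_gt hii with hlt | hlt
          · -- idx d1 < idx d2; d2 = e (idx d2)
            by_cases hdc : d2 ∈ closure (A (idx d1))
            · have h3 := (hA (idx d1)).2.2.1
              by_contra hne
              refine eq_empty_iff_forall_notMem.mp h3 d2 ⟨hdc, hd2D, ?_⟩
              rw [mem_singleton_iff, hidx_eq d1]
              exact fun h => hne h.symm
            · exfalso
              have hdisj := (hA (idx d2)).2.2.2 (idx d1) hlt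
                (by rw [hidx_eq d2]; exact hdc)
              exact eq_empty_iff_forall_notMem.mp hdisj x ⟨hc2, hc1⟩
          · by_cases hdc : d1 ∈ closure (A (idx d2))
            · have h3 := (hA (idx d2)).2.2.1
              by_contra hne
              refine eq_empty_iff_forall_notMem.mp h3 d1 ⟨hdc, hd1D, ?_⟩
              rw [mem_singleton_iff, hidx_eq d2]
              exact fun h => hne h
            · exfalso
              have hdisj := (hA (idx d1)).2.2.2 (idx d2) hlt
                (by rw [hidx_eq d1]; exact hdc)
              exact eq_empty_iff_forall_notMem.mp hdisj x ⟨hc1, hc2⟩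
end

section
/- If there exists a regular pseudocompact space X that is not countably compact and has countable spread (every discrete subspace of X is countable), then there exists an S-space, i.e. a regular hereditarily separable space that is not Lindelöf. -/
/-!
A regular Lindelöf feebly compact space is countably compact, so `X` is not Lindelöf. An open
cover without countable subcover yields, by recursion on `ω₁`, points `x i` each avoiding the
chosen cover members of all earlier points; pulling the topology of `X` back along `x` makes
`ω₁` a regular space with open initial segments `Iic i` and countable spread. It is not
Lindelöf since countable subsets of `ω₁` are bounded. It is hereditarily separable: in a set
`s`, the points outside the closure of the earlier points of `s` form a discrete, hence
countable, set whose closure contains `s` by well-founded induction.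
-/

open Set

/-- Feebly compact: every locally finite family of nonempty open sets is finite. -/
def FeeblyCompact (X : Type*) [TopologicalSpace X] : Prop :=
  ∀ (ι : Type) (U : ι → Set X), (∀ i, IsOpen (U i) ∧ (U i).Nonempty) →
    LocallyFinite U → Finite ι

open Topology TopologicalSpace

namespace FeeblyCompact

variable {X : Type*} [TopologicalSpace X]

theorem exists_dense_of_monotone (hX : FeeblyCompact X) {V : ℕ → Set X}
    (hVo : ∀ n, IsOpen (V n)) (hV : Monotone V) (hcov : ⋃ n, V n = univ) :
    ∃ n, Dense (V n) := by
  by_contra! hnd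
  have hmem : ∀ p : X, ∃ k, p ∈ V k := fun p => mem_iUnion.1 (hcov ▸ mem_univ p)
  have hout : ∀ n, ∃ p, p ∉ closure (V n) := by
    simpa only [dense_iff_closure_eq, eq_univ_iff_forall, not_forall] using hnd
  choose p hp using hout
  choose m hm using fun n => hmem (p n)
  -- `V k` meets `V (m n) \ closure (V n)` only for `n < k`, so this family is locally finite.
  have hfin : Finite ℕ := by
    refine hX ℕ (fun n => V (m n) \ closure (V n))
      (fun n => ⟨(hVo _).sdiff isClosed_closure, p n, hm n, hp n⟩) fun q => ?_
    obtain ⟨k, hk⟩ := hmem q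
    refine ⟨V k, (hVo k).mem_nhds hk, (finite_Iio k).subset fun n ⟨_, hq, hqV⟩ => ?_⟩
    by_contra hkn
    exact hq.2 (subset_closure (hV (not_lt.1 hkn) hqV))
  exact not_finite ℕ

theorem countablyCompactCover [RegularSpace X] [LindelofSpace X] (hX : FeeblyCompact X) :
    CountablyCompactCover X := by
  intro U hUo hcov
  rcases isEmpty_or_nonempty X with _ | _
  · exact ⟨∅, by simp [eq_empty_of_isEmpty]⟩
  choose n hn using fun p : X => mem_iUnion.1 (hcov ▸ mem_univ p)
  choose O hOo hpO hOU using fun p : X =>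
    isCompact_singleton.exists_isOpen_closure_subset
      (nhdsSet_singleton (x := p) ▸ (hUo (n p)).mem_nhds (hn p))
  obtain ⟨f, hf⟩ := isLindelof_univ.indexed_countable_subcover O hOo
    fun p _ => mem_iUnion.2 ⟨p, hpO p rfl⟩
  obtain ⟨m, hm⟩ := hX.exists_dense_of_monotone (V := accumulate (O ∘ f))
    (fun k => by rw [accumulate_def]; exact isOpen_biUnion fun j _ => hOo _)
    monotone_accumulate (by rw [iUnion_accumulate]; exact univ_subset_iff.1 hf)
  refine ⟨(Finset.Iic m).image (n ∘ f), univ_subset_iff.1 ?_⟩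
  calc univ = ⋃ k ≤ m, closure (O (f k)) := by
        rw [← closure_iUnion₂_le_nat, ← hm.closure_eq, accumulate_def]; rfl
    _ ⊆ ⋃ i ∈ (Finset.Iic m).image (n ∘ f), U i := iUnion₂_subset fun k hk =>
        (hOU (f k)).trans <| subset_biUnion_of_mem (u := U)
          (Finset.mem_image_of_mem (n ∘ f) (Finset.mem_Iic.2 hk))

end FeeblyCompact

theorem exists_forall_image_Iio {I α : Type*} [LinearOrder I] [WellFoundedLT I]
    (hI : ∀ i : I, (Iio i).Countable) (P : Set α → α → Prop)
    (H : ∀ s : Set α, s.Countable → ∃ a, P s a) :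
    ∃ x : I → α, ∀ i, P (x '' Iio i) (x i) := by
  have hrange : ∀ (i : I) (y : (j : I) → j < i → α),
      (range fun j : Iio i => y j j.2).Countable := fun i _ =>
    have := (hI i).to_subtype
    countable_range _
  let x := wellFounded_lt.fix fun i y => (H _ (hrange i y)).choose
  refine ⟨x, fun i => ?_⟩
  have hx : x i = (H _ (hrange i fun j _ => x j)).choose := wellFounded_lt.fix_eq _ i
  rw [hx, image_eq_range]
  exact (H _ (hrange i fun j _ => x j)).choose_spec

open Cardinal in
abbrev OmegaOne : Type := (ℵ₁ : Cardinal.{0}).ord.ToType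

namespace OmegaOne

open Cardinal

theorem countable_Iio (i : OmegaOne) : (Iio i).Countable := by
  refine le_aleph0_iff_set_countable.1 (lt_aleph_one_iff.1 ?_)
  simpa using mk_Iio_lt i (by simp)

theorem not_countable : ¬ Countable OmegaOne := by
  rw [← mk_le_aleph0_iff, mk_ord_toType]
  exact aleph0_lt_aleph_one.not_ge

theorem exists_subset_Iio {s : Set OmegaOne} (hs : s.Countable) : ∃ b, s ⊆ Iio b := by
  have hc : (⋃ a ∈ s, Iic a).Countable :=
    hs.biUnion fun a _ => Iio_insert (a := a) ▸ (countable_Iio a).insert a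
  obtain ⟨b, hb⟩ : ∃ b, b ∉ ⋃ a ∈ s, Iic a := by
    by_contra! h
    exact not_countable (countable_univ_iff.1 (hc.mono fun b _ => h b))
  exact ⟨b, fun a ha => mem_Iio.2 <| not_le.1 fun hba => hb (mem_biUnion ha hba)⟩

end OmegaOne

/-- A sequence is right-separated if every initial segment `Iic i` is open in the topology
induced by the sequence. -/
def IsRightSeparated {I X : Type*} [Preorder I] [TopologicalSpace X] (x : I → X) : Prop :=
  ∀ i, ∃ U, IsOpen U ∧ x ⁻¹' U = Iic i

theorem IsRightSeparated.injective {I X : Type*} [PartialOrder I] [TopologicalSpace X]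
    {x : I → X} (hx : IsRightSeparated x) : Function.Injective x := by
  have hle : ∀ {i j}, x i = x j → i ≤ j := fun {i j} hij => by
    obtain ⟨U, -, hU⟩ := hx j
    have hi : i ∈ x ⁻¹' U := by
      rw [mem_preimage, hij, ← mem_preimage, hU]
      exact self_mem_Iic
    rwa [hU] at hi
  exact fun i j hij => le_antisymm (hle hij) (hle hij.symm)

theorem exists_isRightSeparated_of_not_lindelofSpace {X : Type*} [TopologicalSpace X]
    (hX : ¬ LindelofSpace X) : ∃ x : OmegaOne → X, IsRightSeparated x := by
  obtain ⟨ι, U, hUo, hcov, hU⟩ : ∃ (ι : Type _) (U : ι → Set X), (∀ i, IsOpen (U i)) ∧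
      univ ⊆ ⋃ i, U i ∧ ∀ t : Set ι, t.Countable → ¬ univ ⊆ ⋃ i ∈ t, U i := by
    by_contra! h
    exact hX ⟨isLindelof_iff_countable_subcover.2 fun U hUo hcov => h _ U hUo hcov⟩
  choose idx hidx using fun p : X => mem_iUnion.1 (hcov (mem_univ p))
  obtain ⟨x, hx⟩ := exists_forall_image_Iio OmegaOne.countable_Iio
    (fun s p => ∀ q ∈ s, p ∉ U (idx q)) fun s hs => by
      obtain ⟨p, -, hp⟩ := not_subset.1 (hU _ (hs.image idx))
      exact ⟨p, fun q hq hpq => hp (mem_biUnion (mem_image_of_mem idx hq) hpq)⟩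
  refine ⟨x, fun i => ⟨⋃ j ∈ Iic i, U (idx (x j)), isOpen_biUnion fun j _ => hUo _, ?_⟩⟩
  ext k
  simp only [mem_preimage, mem_iUnion₂]
  refine ⟨fun ⟨j, hji, hkj⟩ => ?_, fun hki => ⟨k, hki, hidx (x k)⟩⟩
  by_contra hik
  exact hx k (x j) (mem_image_of_mem x (show j < k from hji.trans_lt (not_le.1 hik))) hkj

section OpenInitialSegments

variable {Y : Type*} [TopologicalSpace Y] [LinearOrder Y] (hIic : ∀ i : Y, IsOpen (Iic i))
include hIic

theorem not_lindelofSpace_of_isOpen_Iic (hbdd : ∀ s : Set Y, s.Countable → ∃ b, s ⊆ Iio b) :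
    ¬ LindelofSpace Y := by
  intro _
  obtain ⟨t, htc, hcov⟩ := isLindelof_univ.elim_countable_subcover Iic hIic
    fun a _ => mem_iUnion.2 ⟨a, self_mem_Iic⟩
  obtain ⟨b, hb⟩ := hbdd t htc
  obtain ⟨a, ha, hba⟩ := mem_iUnion₂.1 (hcov (mem_univ b))
  exact (hb ha).not_ge hba

variable [WellFoundedLT Y]

theorem exists_isDiscrete_subset_closure (s : Set Y) :
    ∃ D ⊆ s, IsDiscrete D ∧ s ⊆ closure D := by
  refine ⟨{a ∈ s | a ∉ closure (s ∩ Iio a)}, sep_subset _ _, ?_, ?_⟩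
  · refine isDiscrete_iff_forall_mem_exists_isOpen.2 fun d hd =>
      ⟨Iic d ∩ (closure (s ∩ Iio d))ᶜ, (hIic d).inter isClosed_closure.isOpen_compl, ?_⟩
    ext e
    refine ⟨fun ⟨⟨hed, hecl⟩, hes, _⟩ => ?_, by rintro rfl; exact ⟨⟨self_mem_Iic, hd.2⟩, hd⟩⟩
    exact eq_of_le_of_not_lt hed fun hlt => hecl (subset_closure ⟨hes, hlt⟩)
  · intro a ha
    induction a using WellFoundedLT.induction with
    | _ a ih =>
      by_cases hcl : a ∈ closure (s ∩ Iio a)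
      · exact closure_minimal (fun b hb => ih b hb.2 hb.1) isClosed_closure hcl
      · exact subset_closure ⟨ha, hcl⟩

theorem separableSpace_of_isOpen_Iic (hspread : ∀ A : Set Y, IsDiscrete A → A.Countable)
    (s : Set Y) : SeparableSpace s := by
  obtain ⟨D, hDs, hD, hsD⟩ := exists_isDiscrete_subset_closure hIic s
  have := (hspread D hD).to_subtype
  exact .of_denseRange (inclusion hDs) ((denseRange_inclusion_iff hDs).2 hsD)

end OpenInitialSegments

/-- If there is a regular pseudocompact (feebly compact) space that is not
countably compact and has countable spread, then there is an S-space: a regular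
hereditarily separable non-Lindelöf space. -/
theorem stmt_6
    (h : ∃ (X : Type) (_ : TopologicalSpace X), RegularSpace X ∧ FeeblyCompact X ∧
      ¬ CountablyCompactCover X ∧ ∀ A : Set X, DiscreteTopology ↥A → A.Countable) :
    ∃ (Y : Type) (_ : TopologicalSpace Y), RegularSpace Y ∧
      (∀ s : Set Y, TopologicalSpace.SeparableSpace ↥s) ∧ ¬ LindelofSpace Y := by
  obtain ⟨X, tX, hreg, hF, hncc, hspread⟩ := h
  obtain ⟨x, hx⟩ := exists_isRightSeparated_of_not_lindelofSpace fun _ : LindelofSpace X =>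
    hncc hF.countablyCompactCover
  let _ : TopologicalSpace OmegaOne := tX.induced x
  have hIic : ∀ i : OmegaOne, IsOpen (Iic i) := fun i => isOpen_induced_iff.2 (hx i)
  have hspreadY : ∀ A : Set OmegaOne, IsDiscrete A → A.Countable := fun A hA =>
    countable_of_injective_of_countable_image hx.injective.injOn
      (hspread _ (hA.image (.induced x)).to_subtype)
  exact ⟨OmegaOne, _, regularSpace_induced x, separableSpace_of_isOpen_Iic hIic hspreadY,
    not_lindelofSpace_of_isOpen_Iic hIic fun _ => OmegaOne.exists_subset_Iio⟩
end

section
/- Every regular space that is not Lindelöf contains a right-separated subspace of cardinality ω₁, i.e. a subspace admitting a well-ordering in which every initial segment is open in the subspace. -/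
open Set

universe u v

section Aux

variable {X : Type u} [TopologicalSpace X]

/-- Extract an open cover with no countable subcover from non-Lindelöfness. -/
lemma stmt7_aux_cover (h : ¬ LindelofSpace X) :
    ∃ (ι : Type u) (U : ι → Set X), (∀ i, IsOpen (U i)) ∧ (⋃ i, U i) = univ ∧
      ∀ t : Set ι, t.Countable → (⋃ i ∈ t, U i) ≠ univ := by
  by_contra hc
  push_neg at hc
  apply h
  constructor
  apply isLindelof_of_countable_subcover
  intro ι U hUo hcov
  obtain ⟨t, htc, htcov⟩ := hc ι U hUo (eq_univ_of_univ_subset hcov)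
  exact ⟨t, htc, htcov.ge⟩

lemma stmt7_main {ι : Type v} (U : ι → Set X) (hUo : ∀ i, IsOpen (U i))
    (hcov : (⋃ i, U i) = univ)
    (hbig : ∀ t : Set ι, t.Countable → (⋃ i ∈ t, U i) ≠ univ) :
    ∃ Y : Set X, Cardinal.mk Y = Cardinal.aleph 1 ∧
      ∃ r : Y → Y → Prop, IsWellOrder Y r ∧ ∀ y : Y, IsOpen {z : Y | r z y} := by
  set O := (Cardinal.aleph 1 : Cardinal.{u}).ord.ToType with hO
  haveI hOwo : IsWellOrder O (· < ·) := isWellOrder_lt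
  -- countability of initial segments
  have hcnt : ∀ a : O, (Set.Iio a).Countable := by
    intro a
    exact (Cardinal.countable_iff_lt_aleph_one _).mpr (Cardinal.mk_Iio_ord_toType a)
  -- key existence step
  have hstep : ∀ (a : O) (g : ∀ b : O, b < a → X × ι),
      ∃ p : X × ι, p.1 ∈ U p.2 ∧ p.1 ∉ ⋃ b : Set.Iio a, U (g b.1 b.2).2 := by
    intro a g
    set g' : Set.Iio a → ι := fun b => (g b.1 b.2).2 with hg'
    have htc : (Set.range g').Countable := by
      haveI : Countable (Set.Iio a) := (hcnt a).to_subtype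
      exact Set.countable_range g'
    have hne := hbig _ htc
    rw [Set.biUnion_range] at hne
    obtain ⟨x, hx⟩ := (ne_univ_iff_exists_notMem _).mp hne
    have hxU : x ∈ ⋃ i, U i := hcov ▸ Set.mem_univ x
    obtain ⟨i, hi⟩ := Set.mem_iUnion.mp hxU
    exact ⟨(x, i), hi, hx⟩
  classical
  let F : ∀ a : O, (∀ b : O, b < a → X × ι) → X × ι := fun a g =>
    Classical.choose (hstep a g)
  let f : O → X × ι := (IsWellFounded.wf (r := (· < · : O → O → Prop))).fix F
  have hfix : ∀ a : O, f a = F a (fun b _ => f b) :=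
    fun a => WellFounded.fix_eq _ F a
  set x : O → X := fun a => (f a).1 with hx
  set u : O → ι := fun a => (f a).2 with hu
  have hspec : ∀ a : O, x a ∈ U (u a) ∧ ∀ b : O, b < a → x a ∉ U (u b) := by
    intro a
    have key : (f a).1 ∈ U ((f a).2) ∧ (f a).1 ∉ ⋃ b : Set.Iio a, U ((f b.1).2) := by
      rw [hfix a]
      exact Classical.choose_spec (hstep a (fun b _ => f b))
    refine ⟨key.1, fun b hb hmem => key.2 ?_⟩
    exact Set.mem_iUnion.mpr ⟨⟨b, hb⟩, hmem⟩
  have hinj : Function.Injective x := by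
    intro a b hab
    by_contra hne
    rcases lt_or_gt_of_ne hne with hlt | hlt
    · exact (hspec b).2 a hlt (hab ▸ (hspec a).1)
    · exact (hspec a).2 b hlt (hab ▸ (hspec b).1)
  refine ⟨Set.range x, ?_, ?_⟩
  · rw [Cardinal.mk_range_eq _ hinj, Cardinal.mk_toType, Cardinal.card_ord]
  · set e : O ≃ Set.range x := Equiv.ofInjective x hinj with he
    refine ⟨fun y z => e.symm y < e.symm z, ?_, ?_⟩
    · exact RelEmbedding.isWellOrder (s := ((· < ·) : O → O → Prop))
        ⟨e.symm.toEmbedding, Iff.rfl⟩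
    · intro y
      have hcoe : ∀ z : Set.range x, (z : X) = x (e.symm z) := by
        intro z
        conv_lhs => rw [← Equiv.apply_symm_apply e z]
        rfl
      have heq : {z : Set.range x | e.symm z < e.symm y} =
          Subtype.val ⁻¹' (⋃ b : Set.Iio (e.symm y), U (u b.1)) := by
        ext z
        simp only [Set.mem_setOf_eq, Set.mem_preimage, Set.mem_iUnion, hcoe z]
        constructor
        · intro hlt
          exact ⟨⟨e.symm z, hlt⟩, (hspec (e.symm z)).1⟩
        · rintro ⟨⟨b, hb⟩, hmem⟩
          by_contra hge
          exact (hspec (e.symm z)).2 b (lt_of_lt_of_le hb (not_lt.mp hge)) hmem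
      rw [show {z : Set.range x | e.symm z < e.symm y} = _ from heq]
      exact (isOpen_iUnion fun b => hUo _).preimage continuous_subtype_val

end Aux

/-- Every regular non-Lindelöf space contains a right-separated subspace of
cardinality ω₁: a subspace with a well-ordering whose initial segments are open in the
subspace. -/
theorem stmt_7 {X : Type*} [TopologicalSpace X] [RegularSpace X]
    (h : ¬ LindelofSpace X) :
    ∃ Y : Set X, Cardinal.mk Y = Cardinal.aleph 1 ∧
      ∃ r : Y → Y → Prop, IsWellOrder Y r ∧ ∀ y : Y, IsOpen {z : Y | r z y} := by
  obtain ⟨ι, U, hUo, hcov, hbig⟩ := stmt7_aux_cover h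
  exact stmt7_main U hUo hcov hbig
end
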